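/- Define h(x) := 1/2^(2^(2x)). Let k ≥ 1 and β ≥ 2 be integers, let 0 ≤ δ ≤ 1 − 3·∑_{i=1}^{k} √(h(i)), and let H be a bipartite (β,k)-HEDCS with vertex parts P and Q having at least (1−δ)·β·|P|/2 edges. Then |Q| ≥ (1 + h(k) − 4δ)·|P|/2. -/
import Mathlib


open Finset

variable {V : Type*} [DecidableEq V]

/-- Degree of a vertex in an edge set. -/
def deg (E : Finset (Sym2 V)) (v : V) : ℕ := (E.filter (fun e => v ∈ e)).card

/-- Edge-degree: the sum of the degrees of the two endpoints. -/
def edeg (E : Finset (Sym2 V)) (e : Sym2 V) : ℕ :=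
  Sym2.lift ⟨fun u v => deg E u + deg E v, fun _ _ => add_comm _ _⟩ e

/-- Generalized `(β,β⁻,k)`-HEDCS of `G`: a hierarchical decomposition
`∅ = H_0 ⊆ H_1 ⊆ … ⊆ H_k = Hs` with edge-degrees in `H_i` of new edges at most `β`,
and every edge of `G` outside `Hs` has edge-degree at least `β⁻` in `Hs`. -/
def IsHEDCSgen (G Hs : Finset (Sym2 V)) (β βm k : ℕ) : Prop :=
  Hs ⊆ G ∧ ∃ H : ℕ → Finset (Sym2 V),
    H 0 = ∅ ∧ H k = Hs ∧
    (∀ i < k, H i ⊆ H (i + 1)) ∧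
    (∀ i, 1 ≤ i → i ≤ k → ∀ e ∈ H i \ H (i - 1), edeg (H i) e ≤ β) ∧
    (∀ e ∈ G \ Hs, βm ≤ edeg Hs e)

/-- `(β,k)`-HEDCS of `G`. -/
def IsHEDCS (G Hs : Finset (Sym2 V)) (β k : ℕ) : Prop :=
  IsHEDCSgen G Hs β (β - 1) k

/-- Bipartite `(β,k)`-HEDCS with vertex parts `P` and `Q`
(the base graph is `Hs` itself, so the second HEDCS condition is vacuous). -/
def IsBipartiteHEDCS (P Q : Finset V) (Hs : Finset (Sym2 V)) (β k : ℕ) : Prop :=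
  Disjoint P Q ∧
  (∀ e ∈ Hs, ∃ u v, e = s(u, v) ∧ u ∈ P ∧ v ∈ Q) ∧
  ∃ H : ℕ → Finset (Sym2 V),
    H 0 = ∅ ∧ H k = Hs ∧
    (∀ i < k, H i ⊆ H (i + 1)) ∧
    (∀ i, 1 ≤ i → i ≤ k → ∀ e ∈ H i \ H (i - 1), edeg (H i) e ≤ β)

/-- A matching: a set of pairwise vertex-disjoint (non-loop) edges. -/
def IsMatching (M : Finset (Sym2 V)) : Prop :=
  (∀ e ∈ M, ¬ e.IsDiag) ∧
  ∀ e ∈ M, ∀ f ∈ M, e ≠ f → ∀ v : V, v ∈ e → v ∉ f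

/-- The maximum matching size of the edge set `E`. -/
noncomputable def matchNum (E : Finset (Sym2 V)) : ℕ :=
  sSup {n : ℕ | ∃ M : Finset (Sym2 V), M ⊆ E ∧ IsMatching M ∧ M.card = n}

/-- `h(x) = 1/2^(2^(2x))`. -/
noncomputable def hfun (x : ℕ) : ℝ := 1 / 2 ^ (2 ^ (2 * x))

section AuxHEDCS

lemma edeg_mk (E : Finset (Sym2 V)) (u v : V) : edeg E s(u,v) = deg E u + deg E v := rfl

lemma deg_mono {E F : Finset (Sym2 V)} (h : E ⊆ F) (v : V) : deg E v ≤ deg F v :=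
  Finset.card_le_card (Finset.filter_subset_filter _ h)

lemma sum_deg_eq_card {A : Finset V} {E : Finset (Sym2 V)}
    (h : ∀ e ∈ E, (A.filter (fun v => v ∈ e)).card = 1) :
    ∑ v ∈ A, deg E v = E.card := by
  unfold deg
  simp_rw [Finset.card_filter]
  rw [Finset.sum_comm]
  simp_rw [← Finset.card_filter]
  rw [Finset.sum_congr rfl h]
  simp

lemma filter_mem_card_one {A B : Finset V} (hd : Disjoint A B) {u v : V}
    (hu : u ∈ A) (hv : v ∈ B) : (A.filter (fun w => w ∈ s(u,v))).card = 1 := by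
  have : A.filter (fun w => w ∈ s(u,v)) = {u} := by
    ext w
    simp only [Finset.mem_filter, Sym2.mem_iff, Finset.mem_singleton]
    constructor
    · rintro ⟨hw, rfl | rfl⟩
      · rfl
      · exact absurd (Finset.disjoint_left.mp hd hw hv) (fun h => h)
    · rintro rfl; exact ⟨hu, Or.inl rfl⟩
  rw [this, Finset.card_singleton]

lemma one_le_deg {E : Finset (Sym2 V)} {e : Sym2 V} {v : V} (he : e ∈ E) (hv : v ∈ e) :
    1 ≤ deg E v := by
  have : e ∈ E.filter (fun e => v ∈ e) := Finset.mem_filter.mpr ⟨he, hv⟩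
  exact Finset.card_pos.mpr ⟨e, this⟩

lemma chain_subset {k : ℕ} {H : ℕ → Finset (Sym2 V)}
    (hmono : ∀ i < k, H i ⊆ H (i + 1)) :
    ∀ j, j ≤ k → ∀ i, i ≤ j → H i ⊆ H j := by
  intro j
  induction j with
  | zero => intro _ i hi; simp [Nat.le_zero.mp hi]
  | succ j ihj =>
      intro hjk i hi
      rcases Nat.eq_or_lt_of_le hi with rfl | hlt
      · exact subset_rfl
      · exact (ihj (by omega) i (by omega)).trans (hmono j (by omega))

lemma deg_le_beta_sub_one {P Q : Finset V} {Hs : Finset (Sym2 V)} {β k : ℕ}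
    {H : ℕ → Finset (Sym2 V)}
    (hdisj : Disjoint P Q)
    (hbip : ∀ e ∈ Hs, ∃ u v, e = s(u, v) ∧ u ∈ P ∧ v ∈ Q)
    (h0 : H 0 = ∅) (hks : H k = Hs)
    (hmono : ∀ i < k, H i ⊆ H (i + 1))
    (hdeg : ∀ i, 1 ≤ i → i ≤ k → ∀ e ∈ H i \ H (i - 1), edeg (H i) e ≤ β)
    (v : V) : deg Hs v ≤ β - 1 := by
  by_cases hzero : deg Hs v = 0
  · omega
  have hsubHs : ∀ i, i ≤ k → H i ⊆ Hs := fun i hi => hks ▸ chain_subset hmono k le_rfl i hi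
  set S := (Finset.range (k+1)).filter (fun i => deg Hs v ≤ deg (H i) v) with hS
  have hkS : k ∈ S := by
    simp only [hS, Finset.mem_filter, Finset.mem_range]
    exact ⟨by omega, by rw [hks]⟩
  have hSne : S.Nonempty := ⟨k, hkS⟩
  set i := S.min' hSne with hidef
  have hiS : i ∈ S := S.min'_mem hSne
  have hik : i ≤ k := by
    have := (Finset.mem_filter.mp hiS).1
    simp only [Finset.mem_range] at this; omega
  have hieq : deg (H i) v = deg Hs v :=
    le_antisymm (deg_mono (hsubHs i hik) v) (Finset.mem_filter.mp hiS).2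
  have hi0 : i ≠ 0 := by
    intro h
    have hz : deg (∅ : Finset (Sym2 V)) v = 0 := by simp [deg]
    rw [h, h0, hz] at hieq
    omega
  have hlt : deg (H (i-1)) v < deg (H i) v := by
    rcases Nat.lt_or_ge (deg (H (i-1)) v) (deg (H i) v) with h | h
    · exact h
    · exfalso
      have hmem : i - 1 ∈ S := by
        simp only [hS, Finset.mem_filter, Finset.mem_range]
        refine ⟨by omega, ?_⟩
        rw [← hieq]; exact h
      have := S.min'_le _ hmem
      omega
  have hsub' : H (i-1) ⊆ H i := chain_subset hmono i hik (i-1) (by omega)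
  have hnotsub : ¬ ((H i).filter (fun e => v ∈ e) ⊆ (H (i-1)).filter (fun e => v ∈ e)) := by
    intro hs
    exact absurd (Finset.card_le_card hs) (not_le.mpr hlt)
  obtain ⟨e, he1, he2⟩ := Finset.not_subset.mp hnotsub
  have heHi : e ∈ H i := (Finset.mem_filter.mp he1).1
  have hve : v ∈ e := (Finset.mem_filter.mp he1).2
  have heHi1 : e ∉ H (i-1) := fun h => he2 (Finset.mem_filter.mpr ⟨h, hve⟩)
  have hedeg : edeg (H i) e ≤ β :=
    hdeg i (by omega) hik e (Finset.mem_sdiff.mpr ⟨heHi, heHi1⟩)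
  obtain ⟨a, b, rfl, haP, hbQ⟩ := hbip e (hsubHs i hik heHi)
  rw [edeg_mk] at hedeg
  have hda : 1 ≤ deg (H i) a := one_le_deg heHi (Sym2.mem_mk_left a b)
  have hdb : 1 ≤ deg (H i) b := one_le_deg heHi (Sym2.mem_mk_right a b)
  rcases Sym2.mem_iff.mp hve with rfl | rfl
  · rw [← hieq]; omega
  · rw [← hieq]; omega

lemma hfun_pos (x : ℕ) : 0 < hfun x := by unfold hfun; positivity

lemma hfun_succ_eq (x : ℕ) : hfun (x+1) = (hfun x)^4 := by
  unfold hfun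
  rw [div_pow, one_pow, ← pow_mul]
  congr 2
  rw [show 2*(x+1) = 2*x + 2 by ring, pow_add]
  norm_num

lemma hfun_le (x : ℕ) (hx : 1 ≤ x) : hfun x ≤ 1/16 := by
  unfold hfun
  rw [div_le_div_iff₀ (by positivity) (by norm_num)]
  have h4 : (4:ℕ) ≤ 2^(2*x) := by
    calc (4:ℕ) = 2^2 := by norm_num
    _ ≤ 2^(2*x) := Nat.pow_le_pow_right (by norm_num) (by omega)
  calc (1:ℝ) * 16 = 2^4 := by norm_num
  _ ≤ 2^(2^(2*x)) := by
      apply pow_le_pow_right₀ (by norm_num : (1:ℝ) ≤ 2) h4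
  _ = 2^(2^(2*x)) * 1 := by ring
  _ ≤ 1 * 2^(2^(2*x)) := by rw [one_mul, mul_one]

lemma sqrt_hfun_one : Real.sqrt (hfun 1) = 1/4 := by
  have : hfun 1 = 1/16 := by unfold hfun; norm_num
  rw [this, show (1:ℝ)/16 = (1/4)^2 by norm_num, Real.sqrt_sq (by norm_num)]

lemma sqrt_hfun_succ (x : ℕ) : Real.sqrt (hfun (x+1)) = (hfun x)^2 := by
  rw [hfun_succ_eq, show (hfun x)^4 = ((hfun x)^2)^2 by ring,
    Real.sqrt_sq (by positivity)]

lemma sqrt_hfun_le_quarter (x : ℕ) (hx : 1 ≤ x) : Real.sqrt (hfun x) ≤ 1/4 := by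
  calc Real.sqrt (hfun x) ≤ Real.sqrt (1/16) := Real.sqrt_le_sqrt (hfun_le x hx)
  _ = 1/4 := by rw [show (1:ℝ)/16 = (1/4)^2 by norm_num, Real.sqrt_sq (by norm_num)]

lemma sum_le_card_mul (A : Finset V) (f : V → ℝ) (c : ℝ) (h : ∀ v ∈ A, f v ≤ c) :
    ∑ v ∈ A, f v ≤ (A.card : ℝ) * c := by
  calc ∑ v ∈ A, f v ≤ A.card • c := Finset.sum_le_card_nsmul A f c h
  _ = (A.card:ℝ) * c := nsmul_eq_mul _ _

lemma arith_crude1 (h δ β : ℝ) (hβ : 2 ≤ β) (hδ0 : 0 ≤ δ) (hδ14 : δ ≤ 1/4)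
    (hh : 0 < h) (hA : h ≤ 3*δ) : (1 + h - 4*δ) * (β - 1) ≤ (1 - δ) * β := by
  nlinarith [mul_nonneg (by linarith : (0:ℝ) ≤ 3*δ - h) (by linarith : (0:ℝ) ≤ β)]

lemma arith_crude2 (h r δ β : ℝ) (hβ : 2 ≤ β) (hδ0 : 0 ≤ δ) (hr0 : 0 < r)
    (hr14 : r ≤ 1/4) (hr2 : r^2 = h) (hh16 : h ≤ 1/16) (hB1 : β * r ≤ 2) :
    (1 + h - 4*δ) * (β - 1) ≤ (1 - δ) * β := by
  have hβh : β * h ≤ 2*r := by nlinarith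
  nlinarith [mul_nonneg hδ0 (by linarith : (0:ℝ) ≤ 3*β - 4)]

lemma arith_trans (x δ : ℝ) (hx0 : 0 < x) (hx16 : x ≤ 1/16) :
    1 + x^4 - 4*δ ≤ 1 + x - 4*(δ + 3*x^2) := by
  nlinarith [sq_nonneg x, pow_pos hx0 2, pow_pos hx0 3]

lemma arith_key (h r δ β : ℝ) (hβ : 2 ≤ β) (hδ0 : 0 ≤ δ) (hr0 : 0 < r)
    (hr14 : r ≤ 1/4) (hr2 : r^2 = h) (hh16 : h ≤ 1/16) (hA : 3*δ < h) :
    (1 + h - 4*δ) * (β - 1) ≤ (1 - δ) * β + h * β - 2*r := by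
  nlinarith [mul_nonneg hδ0 (by linarith : (0:ℝ) ≤ 3*β)]

set_option maxHeartbeats 4000000 in

lemma aux (β : ℕ) (hβ : 2 ≤ β) :
    ∀ k : ℕ, 1 ≤ k → ∀ δ : ℝ, 0 ≤ δ →
      δ ≤ 1 - 3 * ∑ i ∈ Finset.Icc 1 k, Real.sqrt (hfun i) →
      ∀ (P Q : Finset V) (Hs : Finset (Sym2 V)),
        IsBipartiteHEDCS P Q Hs β k →
        (1 - δ) * (β : ℝ) * P.card / 2 ≤ (Hs.card : ℝ) →
        (1 + hfun k - 4 * δ) * P.card / 2 ≤ (Q.card : ℝ) := by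
  intro k
  induction k with
  | zero => omega
  | succ k ih =>
    intro _ δ hδ0 hδ1 P Q Hs hH hcard
    classical
    obtain ⟨hdisj, hbip, H, h0, hks, hmono, hdeg⟩ := hH
    have hβR : (2:ℝ) ≤ (β:ℝ) := by exact_mod_cast hβ
    have hn0 : (0:ℝ) ≤ (P.card : ℝ) := Nat.cast_nonneg _
    have hq0 : (0:ℝ) ≤ (Q.card : ℝ) := Nat.cast_nonneg _
    have hb1 : (0:ℝ) < (β:ℝ) - 1 := by linarith
    have hsubHs : ∀ i, i ≤ k + 1 → H i ⊆ Hs := fun i hi =>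
      hks ▸ chain_subset hmono (k+1) le_rfl i hi
    -- degree bounds
    have hdmax : ∀ v, deg Hs v ≤ β - 1 :=
      deg_le_beta_sub_one hdisj hbip h0 hks hmono hdeg
    have hdmaxR : ∀ v, (deg Hs v : ℝ) ≤ (β:ℝ) - 1 := by
      intro v
      have h1 := hdmax v
      have : ((β - 1 : ℕ) : ℝ) = (β:ℝ) - 1 := by
        rw [Nat.cast_sub (by omega)]; norm_num
      rw [← this]; exact_mod_cast h1
    -- one-endpoint-in-each-side counting
    have hPfilter : ∀ E : Finset (Sym2 V), E ⊆ Hs →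
        ∀ e ∈ E, (P.filter (fun w => w ∈ e)).card = 1 := by
      intro E hE e he
      obtain ⟨u, v, rfl, hu, hv⟩ := hbip e (hE he)
      exact filter_mem_card_one hdisj hu hv
    have hQfilter : ∀ E : Finset (Sym2 V), E ⊆ Hs →
        ∀ e ∈ E, (Q.filter (fun w => w ∈ e)).card = 1 := by
      intro E hE e he
      obtain ⟨u, v, rfl, hu, hv⟩ := hbip e (hE he)
      rw [Sym2.eq_swap]
      exact filter_mem_card_one hdisj.symm hv hu
    have hsumQR : ∑ v ∈ Q, (deg Hs v : ℝ) = (Hs.card : ℝ) := by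
      exact_mod_cast congrArg (Nat.cast (R := ℝ))
        (sum_deg_eq_card (fun e he => hQfilter Hs subset_rfl e he))
    have hcrude : (Hs.card : ℝ) ≤ ((β:ℝ) - 1) * (Q.card : ℝ) := by
      rw [← hsumQR]
      calc ∑ v ∈ Q, (deg Hs v : ℝ) ≤ Q.card • ((β:ℝ) - 1) :=
            Finset.sum_le_card_nsmul _ _ _ (fun v _ => hdmaxR v)
      _ = ((β:ℝ) - 1) * (Q.card : ℝ) := by rw [nsmul_eq_mul]; ring
    -- numeric facts
    have hhpos : 0 < hfun (k+1) := hfun_pos _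
    have hh16 : hfun (k+1) ≤ 1/16 := hfun_le _ (by omega)
    obtain ⟨r, hrdef⟩ : ∃ r : ℝ, r = Real.sqrt (hfun (k+1)) := ⟨_, rfl⟩
    have hr0 : 0 < r := hrdef ▸ Real.sqrt_pos.mpr hhpos
    have hr2 : r^2 = hfun (k+1) := by rw [hrdef]; exact Real.sq_sqrt hhpos.le
    have hr14 : r ≤ 1/4 := hrdef ▸ sqrt_hfun_le_quarter _ (by omega)
    have hδ14 : δ ≤ 1/4 := by
      have h1mem : (1:ℕ) ∈ Finset.Icc 1 (k+1) := by simp [Finset.mem_Icc]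
      have h2 : Real.sqrt (hfun 1) ≤ ∑ i ∈ Finset.Icc 1 (k+1), Real.sqrt (hfun i) :=
        Finset.single_le_sum (f := fun i => Real.sqrt (hfun i))
          (fun i _ => Real.sqrt_nonneg _) h1mem
      rw [sqrt_hfun_one] at h2
      linarith only [h2, hδ1]
    -- shared finishing step for "crude" cases
    have finish : (1 + hfun (k+1) - 4*δ) * ((β:ℝ) - 1) ≤ (1 - δ) * (β:ℝ) →
        (1 + hfun (k+1) - 4 * δ) * (P.card:ℝ) / 2 ≤ (Q.card : ℝ) := by
      intro key
      have t1 : (1 + hfun (k+1) - 4*δ) * ((β:ℝ) - 1) * (P.card:ℝ)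
          ≤ (1 - δ) * (β:ℝ) * (P.card:ℝ) :=
        mul_le_mul_of_nonneg_right key hn0
      have step : (1 + hfun (k+1) - 4 * δ) * (P.card:ℝ) / 2 * ((β:ℝ) - 1)
          ≤ (Q.card : ℝ) * ((β:ℝ) - 1) := by linarith only [t1, hcard, hcrude]
      exact le_of_mul_le_mul_right step hb1
    by_cases hA : hfun (k+1) ≤ 3*δ
    · exact finish (arith_crude1 _ _ _ hβR hδ0 hδ14 hhpos hA)
    by_cases hB1 : (β:ℝ) * r ≤ 2
    · exact finish (arith_crude2 _ r _ _ hβR hδ0 hr0 hr14 hr2 hh16 hB1)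
    push_neg at hA hB1
    -- main hierarchical case
    obtain ⟨δ', hδ'def⟩ : ∃ x : ℝ, x = δ + 3*r := ⟨_, rfl⟩
    have hδ'0 : 0 ≤ δ' := by rw [hδ'def]; linarith
    by_cases hold : (1 - δ') * (β:ℝ) * (P.card:ℝ) / 2 ≤ ((H k).card : ℝ)
    · -- many old edges
      rcases Nat.eq_zero_or_pos k with rfl | hk1
      · -- k = 0 : impossible unless P empty
        rw [h0] at hold
        simp only [Finset.card_empty, Nat.cast_zero] at hold
        have h1δ' : 0 < 1 - δ' := by
          rw [hδ'def]
          have : δ < 1/48 := by linarith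
          linarith
        have hP0 : (P.card:ℝ) ≤ 0 := by
          by_contra hc
          push_neg at hc
          have hpos : 0 < (1 - δ') * (β:ℝ) * (P.card:ℝ) / 2 := by
            have := mul_pos (mul_pos h1δ' (by linarith : (0:ℝ) < (β:ℝ))) hc
            linarith
          linarith
        have hP0' : (P.card:ℝ) = 0 := le_antisymm hP0 hn0
        rw [hP0']
        simpa using hq0
      · -- apply induction hypothesis to H k
        have hsplit : ∑ i ∈ Finset.Icc 1 (k+1), Real.sqrt (hfun i)
            = (∑ i ∈ Finset.Icc 1 k, Real.sqrt (hfun i)) + Real.sqrt (hfun (k+1)) :=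
          Finset.sum_Icc_succ_top (by omega) _
        have hsum' : δ' ≤ 1 - 3 * ∑ i ∈ Finset.Icc 1 k, Real.sqrt (hfun i) := by
          rw [hδ'def]
          rw [hsplit] at hδ1
          rw [hrdef]
          linarith
        have hH' : IsBipartiteHEDCS P Q (H k) β k :=
          ⟨hdisj, fun e he => hbip e (hsubHs k (by omega) he),
            H, h0, rfl, fun i hi => hmono i (by omega),
            fun i h1 h2 => hdeg i h1 (by omega)⟩
        have ihq := ih hk1 δ' hδ'0 hsum' P Q (H k) hH' hold
        have hx16 : hfun k ≤ 1/16 := hfun_le k hk1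
        have hx0 : 0 < hfun k := hfun_pos k
        have hsucc : hfun (k+1) = (hfun k)^4 := hfun_succ_eq k
        have hrx : r = (hfun k)^2 := by rw [hrdef]; exact sqrt_hfun_succ k
        have htrans : 1 + hfun (k+1) - 4*δ ≤ 1 + hfun k - 4*δ' := by
          rw [hδ'def, hsucc, hrx]
          exact arith_trans _ _ hx0 hx16
        have hmm := mul_le_mul_of_nonneg_right htrans hn0
        linarith only [hmm, ihq]
    · -- many new edges: EDCS-type counting
      push_neg at hold
      obtain ⟨τ, hτdef⟩ : ∃ x : ℝ, x = r * (β:ℝ) / 2 := ⟨_, rfl⟩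
      have hτ1 : 1 < τ := by rw [hτdef]; linarith [hB1]
      have hτpos : 0 < τ := by linarith
      have hτβ : τ < (β:ℝ) := by
        rw [hτdef]
        nlinarith [hr14, hβR, hr0]
      obtain ⟨E', hE'def⟩ : ∃ x : Finset (Sym2 V), x = Hs \ H k := ⟨_, rfl⟩
      have hHkHs : H k ⊆ Hs := hsubHs k (by omega)
      have hE'sub : E' ⊆ Hs := by rw [hE'def]; exact Finset.sdiff_subset
      have hE'card : (E'.card : ℝ) = (Hs.card:ℝ) - ((H k).card:ℝ) := by
        rw [hE'def, Finset.card_sdiff_of_subset hHkHs,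
          Nat.cast_sub (Finset.card_le_card hHkHs)]
      have hτn : τ * (P.card:ℝ) = r * (β:ℝ) * (P.card:ℝ) / 2 := by
        rw [hτdef]; ring
      have hmnew : 3 * r * (β:ℝ) * (P.card:ℝ) / 2 ≤ (E'.card:ℝ) := by
        rw [hE'card]
        have hexp : δ' * ((β:ℝ) * (P.card:ℝ)) = δ * ((β:ℝ)*(P.card:ℝ))
            + 3*r*((β:ℝ)*(P.card:ℝ)) := by rw [hδ'def]; ring
        linarith only [hcard, hold, hexp]
      -- new edges have small edge-degree in Hs
      have hnew : ∀ e ∈ E', edeg Hs e ≤ β := by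
        intro e he
        have hmem : e ∈ H (k+1) \ H (k+1-1) := by
          rw [Nat.add_sub_cancel, hks, ← hE'def]; exact he
        have := hdeg (k+1) (by omega) le_rfl e hmem
        rwa [hks] at this
      -- P-side: many new edges at high-degree P vertices
      have hτ0 : (0:ℝ) ≤ τ := le_of_lt hτpos
      have hsumP_E' : ∑ u ∈ P, (deg E' u : ℝ) = (E'.card:ℝ) := by
        exact_mod_cast congrArg (Nat.cast (R := ℝ))
          (sum_deg_eq_card (fun e he => hPfilter E' hE'sub e he))
      obtain ⟨Phi, hPhidef⟩ : ∃ x : Finset V,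
        x = P.filter (fun u => τ ≤ (deg Hs u : ℝ)) := ⟨_, rfl⟩
      obtain ⟨Plo, hPlodef⟩ : ∃ x : Finset V,
        x = P.filter (fun u => ¬ τ ≤ (deg Hs u : ℝ)) := ⟨_, rfl⟩
      have hsplitP : ∑ u ∈ Phi, (deg E' u:ℝ) + ∑ u ∈ Plo, (deg E' u:ℝ)
          = ∑ u ∈ P, (deg E' u:ℝ) := by
        rw [hPhidef, hPlodef]
        exact Finset.sum_filter_add_sum_filter_not P _ _
      have hlo : ∑ u ∈ Plo, (deg E' u:ℝ) ≤ τ * (P.card:ℝ) := by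
        have hb : ∀ u ∈ Plo, (deg E' u:ℝ) ≤ τ := by
          intro u hu
          rw [hPlodef, Finset.mem_filter] at hu
          have h1 : (deg E' u : ℝ) ≤ (deg Hs u : ℝ) := by
            exact_mod_cast deg_mono hE'sub u
          have h2 := hu.2
          push_neg at h2
          linarith
        have h3 : ∑ u ∈ Plo, (deg E' u:ℝ) ≤ (Plo.card:ℝ) * τ := sum_le_card_mul _ _ _ hb
        have h4 : (Plo.card:ℝ) ≤ (P.card:ℝ) := by
          rw [hPlodef]; exact_mod_cast Finset.card_filter_le _ _
        have h5 : (Plo.card:ℝ) * τ ≤ (P.card:ℝ) * τ := mul_le_mul_of_nonneg_right h4 hτ0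
        linarith only [h3, h5]
      have hShi : r*(β:ℝ)*(P.card:ℝ) ≤ ∑ u ∈ Phi, (deg E' u:ℝ) := by
        have h6 := hsplitP
        rw [hsumP_E'] at h6
        linarith only [h6, hmnew, hlo, hτn]
      -- the set F of new edges with high-degree P endpoint
      obtain ⟨F, hFdef⟩ : ∃ x : Finset (Sym2 V),
        x = E'.filter (fun e => ∃ u, u ∈ e ∧ u ∈ P ∧ τ ≤ (deg Hs u:ℝ)) := ⟨_, rfl⟩
      have hFE' : F ⊆ E' := by rw [hFdef]; exact Finset.filter_subset _ _
      have hFsub : F ⊆ Hs := hFE'.trans hE'sub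
      have hdegF_hi : ∀ u ∈ Phi, deg E' u = deg F u := by
        intro u hu
        rw [hPhidef, Finset.mem_filter] at hu
        obtain ⟨huP, huτ⟩ := hu
        unfold deg
        congr 1
        rw [hFdef]
        ext e
        simp only [Finset.mem_filter]
        constructor
        · rintro ⟨he, hue⟩
          exact ⟨⟨he, u, hue, huP, huτ⟩, hue⟩
        · rintro ⟨⟨he, _⟩, hue⟩
          exact ⟨he, hue⟩
      have hsumP_F : ∑ u ∈ P, (deg F u : ℝ) = (F.card:ℝ) := by
        exact_mod_cast congrArg (Nat.cast (R := ℝ))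
          (sum_deg_eq_card (fun e he => hPfilter F hFsub e he))
      have hFge : r*(β:ℝ)*(P.card:ℝ) ≤ (F.card:ℝ) := by
        have hsplitPF : ∑ u ∈ Phi, (deg F u:ℝ) + ∑ u ∈ Plo, (deg F u:ℝ)
            = ∑ u ∈ P, (deg F u:ℝ) := by
          rw [hPhidef, hPlodef]
          exact Finset.sum_filter_add_sum_filter_not P _ _
        have hnn : (0:ℝ) ≤ ∑ u ∈ Plo, (deg F u:ℝ) :=
          Finset.sum_nonneg (fun u _ => by positivity)
        have hsub2 : ∑ u ∈ Phi, (deg F u:ℝ) ≤ ∑ u ∈ P, (deg F u:ℝ) := by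
          linarith only [hsplitPF, hnn]
        have heq : ∑ u ∈ Phi, (deg E' u:ℝ) = ∑ u ∈ Phi, (deg F u:ℝ) :=
          Finset.sum_congr rfl (fun u hu => by rw [hdegF_hi u hu])
        rw [heq] at hShi
        linarith only [hShi, hsub2, hsumP_F]
      -- Q-side: F lands on low-degree Q vertices
      obtain ⟨D, hDdef⟩ : ∃ x : ℝ, x = (β:ℝ) - τ := ⟨_, rfl⟩
      have hD0 : 0 < D := by rw [hDdef]; linarith
      obtain ⟨QL, hQLdef⟩ : ∃ x : Finset V,
        x = Q.filter (fun v => (deg Hs v:ℝ) ≤ D) := ⟨_, rfl⟩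
      obtain ⟨QN, hQNdef⟩ : ∃ x : Finset V,
        x = Q.filter (fun v => ¬ (deg Hs v:ℝ) ≤ D) := ⟨_, rfl⟩
      have hFQL : ∀ v ∈ Q, v ∉ QL → deg F v = 0 := by
        intro v hv hvn
        rw [deg, Finset.card_eq_zero, Finset.filter_eq_empty_iff]
        intro e he
        intro hve
        rw [hFdef, Finset.mem_filter] at he
        obtain ⟨heE', u, hue, huP, huτ⟩ := he
        rw [hE'def] at heE'
        have heHs : e ∈ Hs := (Finset.mem_sdiff.mp heE').1
        obtain ⟨a, b, rfl, haP, hbQ⟩ := hbip e heHs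
        have hua : u = a := by
          rcases Sym2.mem_iff.mp hue with rfl | rfl
          · rfl
          · exact absurd hbQ (Finset.disjoint_left.mp hdisj huP)
        have hvb : v = b := by
          rcases Sym2.mem_iff.mp hve with rfl | rfl
          · exact absurd hv (Finset.disjoint_left.mp hdisj haP)
          · rfl
        have hed := hnew _ (by rw [hE'def]; exact heE')
        rw [edeg_mk] at hed
        have hedR : (deg Hs a : ℝ) + (deg Hs b : ℝ) ≤ (β:ℝ) := by exact_mod_cast hed
        subst hua hvb
        apply hvn
        rw [hQLdef, Finset.mem_filter]
        exact ⟨hv, by rw [hDdef]; linarith⟩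
      have hsumQ_F : ∑ v ∈ Q, (deg F v : ℝ) = (F.card:ℝ) := by
        exact_mod_cast congrArg (Nat.cast (R := ℝ))
          (sum_deg_eq_card (fun e he => hQfilter F hFsub e he))
      have hsplitQF : ∑ v ∈ QL, (deg F v:ℝ) + ∑ v ∈ QN, (deg F v:ℝ)
          = ∑ v ∈ Q, (deg F v:ℝ) := by
        rw [hQLdef, hQNdef]
        exact Finset.sum_filter_add_sum_filter_not Q _ _
      have hzQN : ∑ v ∈ QN, (deg F v:ℝ) = 0 := by
        apply Finset.sum_eq_zero
        intro v hv
        rw [hQNdef, Finset.mem_filter] at hv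
        have hvQ := hv.1
        have hvn : v ∉ QL := by
          rw [hQLdef, Finset.mem_filter]
          tauto
        rw [hFQL v hvQ hvn]; norm_num
      have hQLD : (F.card:ℝ) ≤ (QL.card:ℝ) * D := by
        have hb : ∀ v ∈ QL, (deg F v:ℝ) ≤ D := by
          intro v hv
          rw [hQLdef, Finset.mem_filter] at hv
          have h1 : (deg F v : ℝ) ≤ (deg Hs v : ℝ) := by
            exact_mod_cast deg_mono hFsub v
          linarith [hv.2]
        have hss := sum_le_card_mul QL (fun v => (deg F v:ℝ)) D hb
        linarith only [hss, hsumQ_F, hsplitQF, hzQN]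
      have hQLr : r * (P.card:ℝ) ≤ (QL.card:ℝ) := by
        have h1 : r * (P.card:ℝ) * D ≤ r * (P.card:ℝ) * (β:ℝ) := by
          apply mul_le_mul_of_nonneg_left (by rw [hDdef]; linarith)
          positivity
        have h2 : r * (P.card:ℝ) * D ≤ (QL.card:ℝ) * D := by
          calc r * (P.card:ℝ) * D ≤ r * (P.card:ℝ) * (β:ℝ) := h1
          _ = r * (β:ℝ) * (P.card:ℝ) := by ring
          _ ≤ (F.card:ℝ) := hFge
          _ ≤ (QL.card:ℝ) * D := hQLD
        exact le_of_mul_le_mul_right h2 hD0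
      -- final degree counting over Q
      have hcount : (Hs.card:ℝ) + (QL.card:ℝ)*(τ-1) ≤ ((β:ℝ)-1)*(Q.card:ℝ) := by
        have hs1 : ∑ v ∈ QL, (deg Hs v:ℝ) ≤ (QL.card:ℝ) * D :=
          sum_le_card_mul _ _ _ (fun v hv => by
            rw [hQLdef, Finset.mem_filter] at hv; exact hv.2)
        have hs2 : ∑ v ∈ QN, (deg Hs v:ℝ) ≤ (QN.card:ℝ) * ((β:ℝ)-1) :=
          sum_le_card_mul _ _ _ (fun v _ => hdmaxR v)
        have hcards : (QL.card:ℝ) + (QN.card:ℝ) = (Q.card:ℝ) := by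
          rw [hQLdef, hQNdef]
          exact_mod_cast Finset.card_filter_add_card_filter_not
            (p := fun v => (deg Hs v:ℝ) ≤ D)
        have hsplitQ : ∑ v ∈ QL, (deg Hs v:ℝ) + ∑ v ∈ QN, (deg Hs v:ℝ)
            = (Hs.card:ℝ) := by
          rw [← hsumQR, hQLdef, hQNdef]
          exact Finset.sum_filter_add_sum_filter_not Q _ _
        have hQLD2 : (QL.card:ℝ)*D = (QL.card:ℝ)*((β:ℝ)-τ) := by rw [hDdef]
        have hcards2 : (QL.card:ℝ)*((β:ℝ)-1) + (QN.card:ℝ)*((β:ℝ)-1)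
            = (Q.card:ℝ)*((β:ℝ)-1) := by rw [← hcards]; ring
        linarith only [hs1, hs2, hsplitQ, hQLD2, hcards2]
      -- assemble
      have hrnτ : r*(P.card:ℝ)*(τ-1) = (hfun (k+1)*(β:ℝ) - 2*r)*(P.card:ℝ)/2 := by
        rw [hτdef, ← hr2]; ring
      have key2 : (1-δ)*(β:ℝ)*(P.card:ℝ)/2 + r*(P.card:ℝ)*(τ-1)
          ≤ ((β:ℝ)-1)*(Q.card:ℝ) := by
        have ht : r*(P.card:ℝ)*(τ-1) ≤ (QL.card:ℝ)*(τ-1) :=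
          mul_le_mul_of_nonneg_right hQLr (by linarith only [hτ1])
        linarith only [ht, hcount, hcard]
      have key : (1 + hfun (k+1) - 4*δ)*((β:ℝ)-1)
          ≤ (1-δ)*(β:ℝ) + hfun (k+1)*(β:ℝ) - 2*r :=
        arith_key _ r _ _ hβR hδ0 hr0 hr14 hr2 hh16 hA
      have t1 : (1 + hfun (k+1) - 4*δ)*((β:ℝ)-1)*(P.card:ℝ)
          ≤ ((1-δ)*(β:ℝ) + hfun (k+1)*(β:ℝ) - 2*r)*(P.card:ℝ) :=
        mul_le_mul_of_nonneg_right key hn0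
      have final : (1 + hfun (k+1) - 4 * δ) * (P.card:ℝ) / 2 * ((β:ℝ)-1)
          ≤ (Q.card:ℝ) * ((β:ℝ)-1) := by
        linarith only [t1, key2, hrnτ]
      exact le_of_mul_le_mul_right final hb1

end AuxHEDCS

/-- If `0 ≤ δ ≤ 1 − 3·∑_{i=1}^k √(h(i))` and `H` is a bipartite
`(β,k)`-HEDCS with parts `P`, `Q` and at least `(1−δ)·β·|P|/2` edges, then
`|Q| ≥ (1 + h(k) − 4δ)·|P|/2`. -/
theorem bipartite_hedcs_beating_half {V : Type*} [DecidableEq V]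
    (β k : ℕ) (hβ : 2 ≤ β) (hk : 1 ≤ k) (δ : ℝ)
    (hδ0 : 0 ≤ δ) (hδ1 : δ ≤ 1 - 3 * ∑ i ∈ Finset.Icc 1 k, Real.sqrt (hfun i))
    (P Q : Finset V) (Hs : Finset (Sym2 V))
    (hH : IsBipartiteHEDCS P Q Hs β k)
    (hcard : (1 - δ) * (β : ℝ) * P.card / 2 ≤ (Hs.card : ℝ)) :
    (1 + hfun k - 4 * δ) * P.card / 2 ≤ (Q.card : ℝ) := by
  exact aux β hβ k hk δ hδ0 hδ1 P Q Hs hH hcard
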